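/- arXiv:2311.00071 — 2 statements merged into one kernel-verified Lean document; each statement's English description precedes it below -/
import Mathlib

section
/- Let X = {X ∈ ℂ^{N×L} : X Xᴴ = L·R} with Tr(R) = P_T, and let H = {H ∈ ℂ^{K×N} : ‖H − H̄‖ ≤ θ} for a norm ‖·‖ satisfying ‖M‖_F ≤ B‖M‖ for all M. Then the function f(H) = min_{X ∈ X} ‖H X − S‖_F² is L_f-Lipschitz on H with respect to ‖·‖, where L_f = 2 B L P_T (‖H̄‖_F + Bθ) + 2 B √(L P_T) ‖S‖_F. -/
open scoped Matrix ComplexOrder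

/-- Squared Frobenius norm. -/
noncomputable def frobSq {m n : ℕ} (M : Matrix (Fin m) (Fin n) ℂ) : ℝ :=
  ∑ i, ∑ j, ‖M i j‖ ^ 2

/-!
Every feasible `X` has `‖X‖_F² = tr (X Xᴴ) = L P_T`. For a common `X`, writing
`a² - b² = (a - b)(a + b)` with `a - b ≤ ‖(H₁ - H₂) X‖_F ≤ ‖H₁ - H₂‖_F ‖X‖_F` bounds the difference
of the two objectives uniformly in `X`; on the ball `‖Hᵢ‖_F ≤ ‖H̄‖_F + B θ` and
`‖H₁ - H₂‖_F ≤ B ‖H₁ - H₂‖`, which produces `L_f`. A uniform bound between two functions passes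
to their infima over the same set.
-/

theorem abs_sq_norm_sub_sq_norm_le {E : Type*} [SeminormedAddCommGroup E] (a b : E) :
    |‖a‖ ^ 2 - ‖b‖ ^ 2| ≤ ‖a - b‖ * (‖a‖ + ‖b‖) := by
  rw [sq_sub_sq, abs_mul, abs_of_nonneg (by positivity), mul_comm]
  gcongr
  exact abs_norm_sub_norm_le a b

theorem sInf_image_le_sInf_image_add {α : Type*} {f g : α → ℝ} {s : Set α} {c : ℝ}
    (hs : s.Nonempty) (hf : BddBelow (f '' s)) (h : ∀ x ∈ s, f x ≤ g x + c) :
    sInf (f '' s) ≤ sInf (g '' s) + c := by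
  rw [← sub_le_iff_le_add]
  refine le_csInf (hs.image g) ?_
  rintro _ ⟨x, hx, rfl⟩
  linarith [csInf_le hf ⟨x, hx, rfl⟩, h x hx]

theorem abs_sInf_image_sub_sInf_image_le {α : Type*} {f g : α → ℝ} {s : Set α} {c : ℝ}
    (hs : s.Nonempty) (hf : BddBelow (f '' s)) (hg : BddBelow (g '' s))
    (h : ∀ x ∈ s, |f x - g x| ≤ c) :
    |sInf (f '' s) - sInf (g '' s)| ≤ c := by
  rw [abs_sub_le_iff]
  constructor
  · linarith [sInf_image_le_sInf_image_add hs hf fun x hx =>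
      sub_le_iff_le_add'.mp (abs_sub_le_iff.mp (h x hx)).1]
  · linarith [sInf_image_le_sInf_image_add hs hg fun x hx =>
      sub_le_iff_le_add'.mp (abs_sub_le_iff.mp (h x hx)).2]

namespace Matrix

open scoped Matrix.Norms.Frobenius

variable {m n p : Type*} [Fintype m] [Fintype n] [Fintype p]

theorem frobenius_norm_sq {α : Type*} [SeminormedAddCommGroup α] (A : Matrix m n α) :
    ‖A‖ ^ 2 = ∑ i, ∑ j, ‖A i j‖ ^ 2 := by
  rw [frobenius_norm_def, ← Real.rpow_natCast, ← Real.rpow_mul (by positivity)]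
  norm_num

variable {𝕜 : Type*} [RCLike 𝕜]

theorem trace_mul_conjTranspose_self (A : Matrix m n 𝕜) :
    (A * Aᴴ).trace = ((‖A‖ ^ 2 : ℝ) : 𝕜) := by
  simp only [frobenius_norm_sq, trace, diag, mul_apply, conjTranspose_apply, RCLike.star_def,
    RCLike.mul_conj]
  push_cast
  rfl

theorem abs_sq_norm_mul_sub_sub_sq_norm_mul_sub_le (H₁ H₂ : Matrix m n 𝕜) (X : Matrix n p 𝕜)
    (S : Matrix m p 𝕜) :
    |‖H₁ * X - S‖ ^ 2 - ‖H₂ * X - S‖ ^ 2| ≤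
      ‖H₁ - H₂‖ * ‖X‖ * ((‖H₁‖ + ‖H₂‖) * ‖X‖ + 2 * ‖S‖) := by
  have h_sub : H₁ * X - S - (H₂ * X - S) = (H₁ - H₂) * X := by rw [Matrix.sub_mul]; abel
  have h_le : ∀ H : Matrix m n 𝕜, ‖H * X - S‖ ≤ ‖H‖ * ‖X‖ + ‖S‖ := fun H =>
    (norm_sub_le _ _).trans (by gcongr; exact frobenius_norm_mul H X)
  calc |‖H₁ * X - S‖ ^ 2 - ‖H₂ * X - S‖ ^ 2|
      ≤ ‖(H₁ - H₂) * X‖ * (‖H₁ * X - S‖ + ‖H₂ * X - S‖) :=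
        h_sub ▸ abs_sq_norm_sub_sq_norm_le _ _
    _ ≤ ‖H₁ - H₂‖ * ‖X‖ * ((‖H₁‖ * ‖X‖ + ‖S‖) + (‖H₂‖ * ‖X‖ + ‖S‖)) := by
        gcongr
        · exact frobenius_norm_mul _ _
        · exact h_le H₁
        · exact h_le H₂
    _ = ‖H₁ - H₂‖ * ‖X‖ * ((‖H₁‖ + ‖H₂‖) * ‖X‖ + 2 * ‖S‖) := by ring

end Matrix

section frobSq

open scoped Matrix.Norms.Frobenius

theorem frobSq_eq_norm_sq {m n : ℕ} (M : Matrix (Fin m) (Fin n) ℂ) : frobSq M = ‖M‖ ^ 2 :=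
  (Matrix.frobenius_norm_sq M).symm

theorem sq_norm_eq_of_mul_conjTranspose_eq {N L : ℕ} {R : Matrix (Fin N) (Fin N) ℂ} {P : ℝ}
    (htr : R.trace = (P : ℂ)) {X : Matrix (Fin N) (Fin L) ℂ} (hX : X * Xᴴ = (L : ℂ) • R) :
    ‖X‖ ^ 2 = L * P := by
  have h := Matrix.trace_mul_conjTranspose_self X
  rw [hX, Matrix.trace_smul, htr, smul_eq_mul] at h
  exact Complex.ofReal_injective (h.symm.trans (by push_cast; ring))

end frobSq

theorem f_lipschitz_general {K N L : ℕ}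
    (R : Matrix (Fin N) (Fin N) ℂ)
    (P_T : ℝ) (htr : R.trace = (P_T : ℂ))
    (S : Matrix (Fin K) (Fin L) ℂ)
    (Xset : Set (Matrix (Fin N) (Fin L) ℂ))
    (hXset : Xset = {X | X * Xᴴ = (L : ℂ) • R}) (hXne : Xset.Nonempty)
    (nrm : Matrix (Fin K) (Fin N) ℂ → ℝ)
    (B : ℝ) (hB : 0 < B)
    (hnrm : ∀ M : Matrix (Fin K) (Fin N) ℂ, Real.sqrt (frobSq M) ≤ B * nrm M)
    (Hbar : Matrix (Fin K) (Fin N) ℂ) (θ : ℝ)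
    (L_f : ℝ)
    (hLf : L_f = 2 * B * L * P_T * (Real.sqrt (frobSq Hbar) + B * θ) +
      2 * B * Real.sqrt (L * P_T) * Real.sqrt (frobSq S)) :
    ∀ H₁, nrm (H₁ - Hbar) ≤ θ → ∀ H₂, nrm (H₂ - Hbar) ≤ θ →
      |sInf ((fun X => frobSq (H₁ * X - S)) '' Xset) -
        sInf ((fun X => frobSq (H₂ * X - S)) '' Xset)| ≤ L_f * nrm (H₁ - H₂) := by
  open scoped Matrix.Norms.Frobenius in
  intro H₁ h₁ H₂ h₂
  have h_frob_le (M : Matrix (Fin K) (Fin N) ℂ) : ‖M‖ ≤ B * nrm M := by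
    simpa only [frobSq_eq_norm_sq, Real.sqrt_sq_eq_abs, abs_norm] using hnrm M
  have h_ball {H} (hH : nrm (H - Hbar) ≤ θ) : ‖H‖ ≤ ‖Hbar‖ + B * θ :=
    (norm_le_norm_add_norm_sub' H Hbar).trans (by gcongr; exact (h_frob_le _).trans (by gcongr))
  have h_bdd (H : Matrix (Fin K) (Fin N) ℂ) :
      BddBelow ((fun X => frobSq (H * X - S)) '' Xset) :=
    ⟨0, by rintro _ ⟨X, -, rfl⟩; simp only [frobSq_eq_norm_sq]; positivity⟩
  refine abs_sInf_image_sub_sInf_image_le hXne (h_bdd H₁) (h_bdd H₂) fun X hX => ?_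
  rw [hXset] at hX
  have hX_sq := sq_norm_eq_of_mul_conjTranspose_eq htr hX
  have hX_norm : Real.sqrt (L * P_T) = ‖X‖ := by rw [← hX_sq, Real.sqrt_sq (norm_nonneg X)]
  calc |frobSq (H₁ * X - S) - frobSq (H₂ * X - S)|
      ≤ ‖H₁ - H₂‖ * ‖X‖ * ((‖H₁‖ + ‖H₂‖) * ‖X‖ + 2 * ‖S‖) := by
        simpa only [frobSq_eq_norm_sq] using
          Matrix.abs_sq_norm_mul_sub_sub_sq_norm_mul_sub_le H₁ H₂ X S
    _ ≤ B * nrm (H₁ - H₂) * ‖X‖ * (2 * (‖Hbar‖ + B * θ) * ‖X‖ + 2 * ‖S‖) := by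
        have h_dist : ‖H₁ - H₂‖ ≤ B * nrm (H₁ - H₂) := h_frob_le _
        have h_sum : ‖H₁‖ + ‖H₂‖ ≤ 2 * (‖Hbar‖ + B * θ) := by linarith [h_ball h₁, h_ball h₂]
        gcongr
        exact mul_nonneg ((norm_nonneg _).trans h_dist) (norm_nonneg X)
    _ = L_f * nrm (H₁ - H₂) := by
        rw [hLf, hX_norm]
        simp only [frobSq_eq_norm_sq, Real.sqrt_sq_eq_abs, abs_norm]
        linear_combination (2 * B * (‖Hbar‖ + B * θ) * nrm (H₁ - H₂)) * hX_sq

/-- Lipschitz continuity of f(H) = min_{X : XXᴴ = L·R} ‖HX − S‖_F² on the uncertainty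
ball, with constant L_f = 2 B L P_T (‖H̄‖_F + Bθ) + 2 B √(L P_T) ‖S‖_F. -/
theorem f_lipschitz {K N L : ℕ} (hL : 0 < L)
    (R : Matrix (Fin N) (Fin N) ℂ) (hR : R.PosSemidef)
    (P_T : ℝ) (hPT : 0 < P_T) (htr : R.trace = (P_T : ℂ))
    (S : Matrix (Fin K) (Fin L) ℂ)
    (Xset : Set (Matrix (Fin N) (Fin L) ℂ))
    (hXset : Xset = {X | X * Xᴴ = (L : ℂ) • R}) (hXne : Xset.Nonempty)
    (nrm : Matrix (Fin K) (Fin N) ℂ → ℝ)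
    (B : ℝ) (hB : 0 < B)
    (hnrm : ∀ M : Matrix (Fin K) (Fin N) ℂ, Real.sqrt (frobSq M) ≤ B * nrm M)
    (Hbar : Matrix (Fin K) (Fin N) ℂ) (θ : ℝ) (hθ : 0 ≤ θ)
    (L_f : ℝ)
    (hLf : L_f = 2 * B * L * P_T * (Real.sqrt (frobSq Hbar) + B * θ) +
      2 * B * Real.sqrt (L * P_T) * Real.sqrt (frobSq S)) :
    ∀ H₁, nrm (H₁ - Hbar) ≤ θ → ∀ H₂, nrm (H₂ - Hbar) ≤ θ →
      |sInf ((fun X => frobSq (H₁ * X - S)) '' Xset) -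
        sInf ((fun X => frobSq (H₂ * X - S)) '' Xset)| ≤ L_f * nrm (H₁ - H₂) :=
  f_lipschitz_general R P_T htr S Xset hXset hXne nrm B hB hnrm Hbar θ L_f hLf
end

section
/- In the iteration of the convex quadratic maximization algorithm, each round strictly improves the objective: if h_{k} solves max_{‖h − h̄‖ ≤ θ} ⟨CᵀC y_k − Cᵀ s, h⟩ and y_k solves max_{‖Cy − s‖₂ ≤ ‖C h_{k−1} − s‖₂} ⟨CᵀC h_{k−1} − Cᵀ s, y⟩, and the termination condition ⟨CᵀC y_k − Cᵀ s, h_k − y_k⟩ ≤ 0 fails (i.e., the inner product is > 0), then p(h_k) > p(y_k) ≥ p(h_{k−1}), where p(h) = ‖C h − s‖₂². -/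
open Matrix

/-- One round of the convex quadratic maximization algorithm strictly improves the
objective p(h) = ‖Ch − s‖₂² when the termination condition fails:
p(h_k) > p(y_k) ≥ p(h_{k−1}). -/
theorem iteration_strict_improvement {m n : ℕ}
    (C : Matrix (Fin m) (Fin n) ℝ) (hC : (Cᵀ * C).PosDef)
    (s : Fin m → ℝ) (hbar : Fin n → ℝ) (θ : ℝ) (hθ : 0 < θ)
    (p : (Fin n → ℝ) → ℝ) (hp : p = fun h => ∑ i, (C.mulVec h - s) i ^ 2)
    (g : (Fin n → ℝ) → (Fin n → ℝ))
    (hg : g = fun v => (Cᵀ * C).mulVec v - Cᵀ.mulVec s)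
    (hkm yk hk : Fin n → ℝ)
    -- y_k solves max ⟨g(h_{k−1}), y⟩ s.t. ‖Cy − s‖₂² = ‖Ch_{k−1} − s‖₂²
    (hykFeas : p yk = p hkm)
    (hykOpt : ∀ y : Fin n → ℝ, p y = p hkm →
      ∑ i, g hkm i * y i ≤ ∑ i, g hkm i * yk i)
    -- h_k solves max ⟨g(y_k), h⟩ s.t. ‖h − h̄‖₂ ≤ θ
    (hhkFeas : Real.sqrt (∑ i, (hk i - hbar i) ^ 2) ≤ θ)
    (hhkOpt : ∀ h : Fin n → ℝ, Real.sqrt (∑ i, (h i - hbar i) ^ 2) ≤ θ →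
      ∑ i, g yk i * h i ≤ ∑ i, g yk i * hk i)
    -- the termination condition ⟨g(y_k), h_k − y_k⟩ ≤ 0 fails
    (hfail : 0 < ∑ i, g yk i * (hk i - yk i)) :
    p yk < p hk ∧ p hkm ≤ p yk := by
  subst hp hg
  refine ⟨?_, le_of_eq hykFeas.symm⟩
  set a : Fin m → ℝ := C.mulVec yk - s with ha
  set d : Fin n → ℝ := hk - yk with hd
  have hg' : (fun v => (Cᵀ * C).mulVec v - Cᵀ.mulVec s) yk = Cᵀ.mulVec a := by
    simp [ha, Matrix.mulVec_sub, Matrix.mulVec_mulVec]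
  have hdot : ∑ i, Cᵀ.mulVec a i * d i = ∑ j, a j * C.mulVec d j := by
    simp only [Matrix.mulVec, dotProduct, Matrix.transpose_apply,
      Finset.sum_mul, Finset.mul_sum]
    rw [Finset.sum_comm]
    congr 1; ext j; congr 1; ext i; ring
  have hpos : 0 < ∑ j, a j * C.mulVec d j := by
    rw [← hdot, ← hg']
    simpa [hd, mul_sub] using hfail
  have hexp : ∀ i, (C.mulVec hk - s) i ^ 2
      = (a i) ^ 2 + 2 * (a i * C.mulVec d i) + (C.mulVec d i) ^ 2 := by
    intro i
    have : C.mulVec hk i = a i + s i + C.mulVec d i := by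
      simp only [ha, hd, Matrix.mulVec_sub, Pi.sub_apply]
      ring
    simp only [Pi.sub_apply, this]; ring
  calc ∑ i, (C.mulVec yk - s) i ^ 2
      = ∑ i, a i ^ 2 := by simp [ha]
    _ < ∑ i, (a i ^ 2 + 2 * (a i * C.mulVec d i) + (C.mulVec d i) ^ 2) := by
        rw [Finset.sum_add_distrib, Finset.sum_add_distrib, ← Finset.mul_sum]
        have h2 : (0:ℝ) ≤ ∑ i, (C.mulVec d i) ^ 2 :=
          Finset.sum_nonneg fun i _ => sq_nonneg _
        nlinarith
    _ = ∑ i, (C.mulVec hk - s) i ^ 2 := by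
        exact Finset.sum_congr rfl fun i _ => (hexp i).symm
end
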